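/- arXiv:2007.15462 — 2 statements merged into one kernel-verified Lean document; each statement's English description precedes it below -/
import Mathlib

section
/- Let s : ℝ → ℝ be differentiable with ṡ(t)·s(t) ≤ -β|s(t)| for all t, where β > 0. If s(0) ≠ 0, then there exists T ≤ |s(0)|/β such that s(T) = 0. -/
/-!
Away from the zeros of `s`, the function `|s|` is differentiable with derivative
`ṡ · sgn s = ṡ s / |s| ≤ -β`. So as long as `s` does not vanish, `|s|` decreases at rate at least
`β`, and by the mean value inequality it would become `≤ 0` by time `a + |s a| / β`.
-/

theorem deriv_abs_comp_le_of_deriv_mul_le {f : ℝ → ℝ} {x β : ℝ} (hf : DifferentiableAt ℝ f x)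
    (hx : f x ≠ 0) (h : deriv f x * f x ≤ -β * |f x|) :
    deriv (fun t => |f t|) x ≤ -β := by
  have hderiv : deriv (fun t => |f t|) x * |f x| = deriv f x * f x := by
    rw [show (fun t => |f t|) = (|·|) ∘ f from rfl,
      deriv_comp x (differentiableAt_abs hx) hf, deriv_abs]
    rcases hx.lt_or_gt with hneg | hpos
    · simp [hneg, abs_of_neg hneg]
    · simp [hpos, abs_of_pos hpos]
  exact le_of_mul_le_mul_right (hderiv ▸ h) (abs_pos.2 hx)

theorem exists_zero_mem_Icc_of_deriv_mul_le_neg_abs {s : ℝ → ℝ} (hs : Differentiable ℝ s)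
    {β : ℝ} (hβ : 0 < β) (h : ∀ t, deriv s t * s t ≤ -β * |s t|) (a : ℝ) :
    ∃ T ∈ Set.Icc a (a + |s a| / β), s T = 0 := by
  by_contra! hne
  set T := a + |s a| / β
  have haT : a ≤ T := le_add_of_nonneg_right (by positivity)
  have hdecay : |s T| - |s a| ≤ -β * (T - a) := by
    refine (convex_Icc a T).image_sub_le_mul_sub_of_deriv_le
      (hs.continuous.abs.continuousOn) ?_ ?_ a (Set.left_mem_Icc.2 haT) T
      (Set.right_mem_Icc.2 haT) haT
    · exact hs.differentiableOn.abs fun t ht => hne t (interior_subset ht)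
    · exact fun t ht => deriv_abs_comp_le_of_deriv_mul_le (hs t) (hne t (interior_subset ht)) (h t)
  have hβT : β * (T - a) = |s a| := by simp only [T]; field_simp; ring
  have hsT : |s T| ≤ 0 := by linarith
  exact hne T (Set.right_mem_Icc.2 haT) (abs_nonpos_iff.1 hsT)

theorem stmt_1_general (s : ℝ → ℝ) (hs : Differentiable ℝ s) (β : ℝ) (hβ : 0 < β)
    (h : ∀ t, deriv s t * s t ≤ -β * |s t|) :
    ∃ T ≤ |s 0| / β, s T = 0 := by
  obtain ⟨T, ⟨-, hT⟩, hsT⟩ := exists_zero_mem_Icc_of_deriv_mul_le_neg_abs hs hβ h 0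
  exact ⟨T, by simpa using hT, hsT⟩

theorem stmt_1 (s : ℝ → ℝ) (hs : Differentiable ℝ s) (β : ℝ) (hβ : 0 < β)
    (h : ∀ t, deriv s t * s t ≤ -β * |s t|)
    (h0 : s 0 ≠ 0) :
    ∃ T ≤ |s 0| / β, s T = 0 :=
  stmt_1_general s hs β hβ h
end

section
/- Let e : ℝ → ℝ be a C¹ function and λ > 0, and define s(t) = e(t) + λ·ė(t). If s(t) → 0 as t → ∞ and e is bounded, then e(t) → 0 as t → ∞. -/
/-!
Compare with the constant solution: if `e + l ė ≤ c` on `[T, ∞)`, then `(e t - c) exp (t / l)` has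
derivative `(e + l ė - c) exp (t / l) / l ≤ 0`, so `e t - c ≤ (e T - c) exp ((T - t) / l)`, which
tends to `0`. Hence `e` is eventually below every `c' > c`; applied to `-e` this also gives the
lower bound, and `e + l ė → a` forces `e → a`.
-/

open Filter Set Topology

section FirstOrderDecay

variable {e e' : ℝ → ℝ} {l : ℝ}

theorem sub_le_mul_exp_of_add_mul_deriv_le (hl : 0 < l) (he : ∀ t, HasDerivAt e (e' t) t)
    {c T : ℝ} (hc : ∀ t ≥ T, e t + l * e' t ≤ c) {t : ℝ} (ht : T ≤ t) :
    e t - c ≤ (e T - c) * Real.exp ((T - t) / l) := by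
  set g : ℝ → ℝ := fun u => (e u - c) * Real.exp (u / l)
  have hg : ∀ u, HasDerivAt g ((e u + l * e' u - c) / l * Real.exp (u / l)) u := by
    intro u
    refine (((he u).sub_const c).mul ((hasDerivAt_id u).div_const l).exp).congr_deriv ?_
    simp only [id]
    field_simp
    ring
  have hg_anti : AntitoneOn g (Ici T) := by
    refine antitoneOn_of_hasDerivWithinAt_nonpos (convex_Ici T)
      (fun u _ => (hg u).continuousAt.continuousWithinAt) (fun u _ => (hg u).hasDerivWithinAt) ?_
    rw [interior_Ici]
    intro u hu
    have : e u + l * e' u - c ≤ 0 := by linarith [hc u hu.le]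
    exact mul_nonpos_of_nonpos_of_nonneg (div_nonpos_of_nonpos_of_nonneg this hl.le)
      (Real.exp_pos _).le
  have hgt : g t ≤ g T := hg_anti self_mem_Ici ht ht
  have hexp : Real.exp ((T - t) / l) = Real.exp (T / l) / Real.exp (t / l) := by
    rw [sub_div, Real.exp_sub]
  rw [hexp, mul_div_assoc', le_div_iff₀ (Real.exp_pos _)]
  exact hgt

theorem eventually_lt_of_eventually_add_mul_deriv_le (hl : 0 < l)
    (he : ∀ t, HasDerivAt e (e' t) t) {c c' : ℝ} (hc : ∀ᶠ t in atTop, e t + l * e' t ≤ c)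
    (hcc' : c < c') : ∀ᶠ t in atTop, e t < c' := by
  obtain ⟨T, hT⟩ := eventually_atTop.1 hc
  have hdecay : Tendsto (fun t => (e T - c) * Real.exp ((T - t) / l)) atTop (𝓝 0) := by
    have hlin : Tendsto (fun t => (T - t) / l) atTop atBot :=
      (tendsto_atBot_add_const_left atTop T tendsto_neg_atTop_atBot).atBot_div_const hl
    simpa using (Real.tendsto_exp_atBot.comp hlin).const_mul (e T - c)
  filter_upwards [hdecay.eventually (gt_mem_nhds (sub_pos.2 hcc')), eventually_ge_atTop T]
    with t hsmall ht
  linarith [sub_le_mul_exp_of_add_mul_deriv_le hl he hT ht]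

theorem tendsto_of_tendsto_add_mul_deriv (hl : 0 < l) (he : ∀ t, HasDerivAt e (e' t) t)
    {a : ℝ} (hs : Tendsto (fun t => e t + l * e' t) atTop (𝓝 a)) : Tendsto e atTop (𝓝 a) := by
  refine tendsto_order.2 ⟨fun c' hc' => ?_, fun c' hc' => ?_⟩
  · obtain ⟨c, hc'c, hca⟩ := exists_between hc'
    have hneg : ∀ᶠ t in atTop, -e t + l * -e' t ≤ -c :=
      (hs.eventually (le_mem_nhds hca)).mono fun t ht => by linarith
    filter_upwards [eventually_lt_of_eventually_add_mul_deriv_le hl (fun t => (he t).neg) hneg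
      (neg_lt_neg hc'c)] with t ht
    exact neg_lt_neg_iff.1 ht
  · obtain ⟨c, hac, hcc'⟩ := exists_between hc'
    exact eventually_lt_of_eventually_add_mul_deriv_le hl he
      (hs.eventually (ge_mem_nhds hac)) hcc'

end FirstOrderDecay

theorem stmt_3_general (e : ℝ → ℝ) (he : ContDiff ℝ 1 e) (l : ℝ) (hl : 0 < l)
    (s : ℝ → ℝ) (hsdef : ∀ t, s t = e t + l * deriv e t)
    (hs : Filter.Tendsto s Filter.atTop (nhds 0)) :
    Filter.Tendsto e Filter.atTop (nhds 0) := by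
  have hderiv : ∀ t, HasDerivAt e (deriv e t) t :=
    fun t => (he.differentiable one_ne_zero t).hasDerivAt
  rw [funext hsdef] at hs
  exact tendsto_of_tendsto_add_mul_deriv hl hderiv hs

theorem stmt_3 (e : ℝ → ℝ) (he : ContDiff ℝ 1 e) (l : ℝ) (hl : 0 < l)
    (s : ℝ → ℝ) (hsdef : ∀ t, s t = e t + l * deriv e t)
    (hs : Filter.Tendsto s Filter.atTop (nhds 0))
    (hbdd : ∃ C, ∀ t, |e t| ≤ C) :
    Filter.Tendsto e Filter.atTop (nhds 0) :=
  stmt_3_general e he l hl s hsdef hs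
end
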